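/- Fix a real number p > 0 and let ψ(t) = (1 + (t + √(t²+4t))/2)^{p/2} + (1 + (t − √(t²+4t))/2)^{p/2} for t ≥ 0. Then ψ is twice differentiable on (0,∞) and satisfies the differential equation (t² + 4t)·ψ''(t) + (t + 2)·ψ'(t) − (p²/4)·ψ(t) = 0 for all t > 0. -/

import Mathlib

/-!
With `s = √(t² + 4t)`, the two bases `u, v = 1 + (t ± s)/2` satisfy `u' = u/s` and `v' = -v/s`.
Hence, for `a = p/2`, the functions `ψ = u^a + v^a` and `φ = u^a - v^a` satisfy the first-order
system `ψ' = a φ / s`, `φ' = a ψ / s`. Since `s s' = t + 2`, differentiating `s ψ' = a φ` gives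
`s (s ψ')' = a² ψ`, which is the equation `(t² + 4t) ψ'' + (t + 2) ψ' = (p²/4) ψ`.
-/

noncomputable def psiFun (p : ℝ) (t : ℝ) : ℝ :=
  (1 + (t + Real.sqrt (t ^ 2 + 4 * t)) / 2) ^ (p / 2) +
    (1 + (t - Real.sqrt (t ^ 2 + 4 * t)) / 2) ^ (p / 2)

open Real Filter Topology

theorem HasDerivAt.rpow_const_of_eq_mul {f : ℝ → ℝ} {c x : ℝ} (a : ℝ)
    (hf : HasDerivAt f (c * f x) x) (hx : f x ≠ 0) :
    HasDerivAt (fun y => f y ^ a) (a * c * f x ^ a) x := by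
  convert hf.rpow_const (p := a) (Or.inl hx) using 1
  rw [rpow_sub_one hx]
  field_simp

section Roots

variable {t : ℝ}

theorem hasDerivAt_sqrt_sq_add_four_mul (ht : 0 < t) :
    HasDerivAt (fun x => √(x ^ 2 + 4 * x)) ((t + 2) / √(t ^ 2 + 4 * t)) t := by
  have hpoly : HasDerivAt (fun x => x ^ 2 + 4 * x) (2 * t + 4) t :=
    ((hasDerivAt_pow 2 t).add ((hasDerivAt_id t).const_mul 4)).congr_deriv (by simp)
  convert hpoly.sqrt (by positivity) using 1
  field_simp
  ring

theorem sqrt_sq_add_four_mul_lt (ht : 0 ≤ t) : √(t ^ 2 + 4 * t) < t + 2 :=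
  (sqrt_lt' (by linarith)).2 (by nlinarith)

/-- `upperRoot t` and `lowerRoot t` are the two roots of `x² - (t + 2) x + 1`. -/
noncomputable def upperRoot (t : ℝ) : ℝ := 1 + (t + √(t ^ 2 + 4 * t)) / 2

noncomputable def lowerRoot (t : ℝ) : ℝ := 1 + (t - √(t ^ 2 + 4 * t)) / 2

theorem upperRoot_pos (ht : 0 ≤ t) : 0 < upperRoot t := by
  unfold upperRoot
  positivity

theorem lowerRoot_pos (ht : 0 ≤ t) : 0 < lowerRoot t := by
  unfold lowerRoot
  linarith [sqrt_sq_add_four_mul_lt ht]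

theorem hasDerivAt_upperRoot (ht : 0 < t) :
    HasDerivAt upperRoot (upperRoot t / √(t ^ 2 + 4 * t)) t := by
  have hs : 0 < √(t ^ 2 + 4 * t) := sqrt_pos.2 (by positivity)
  refine ((((hasDerivAt_id t).add (hasDerivAt_sqrt_sq_add_four_mul ht)).div_const 2).const_add 1
    ).congr_deriv ?_
  unfold upperRoot
  field_simp
  ring

theorem hasDerivAt_lowerRoot (ht : 0 < t) :
    HasDerivAt lowerRoot (-lowerRoot t / √(t ^ 2 + 4 * t)) t := by
  have hs : 0 < √(t ^ 2 + 4 * t) := sqrt_pos.2 (by positivity)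
  refine ((((hasDerivAt_id t).sub (hasDerivAt_sqrt_sq_add_four_mul ht)).div_const 2).const_add 1
    ).congr_deriv ?_
  unfold lowerRoot
  field_simp
  ring

end Roots

section Psi

variable (p : ℝ) {t : ℝ}

noncomputable def psiOdd (t : ℝ) : ℝ := upperRoot t ^ (p / 2) - lowerRoot t ^ (p / 2)

theorem psiFun_eq_rpow_add_rpow :
    psiFun p = fun t => upperRoot t ^ (p / 2) + lowerRoot t ^ (p / 2) :=
  rfl

theorem hasDerivAt_upperRoot_rpow (ht : 0 < t) :
    HasDerivAt (fun x => upperRoot x ^ (p / 2))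
      (p / 2 * (1 / √(t ^ 2 + 4 * t)) * upperRoot t ^ (p / 2)) t :=
  (hasDerivAt_upperRoot ht |>.congr_deriv (by ring)).rpow_const_of_eq_mul _
    (upperRoot_pos ht.le).ne'

theorem hasDerivAt_lowerRoot_rpow (ht : 0 < t) :
    HasDerivAt (fun x => lowerRoot x ^ (p / 2))
      (p / 2 * (-1 / √(t ^ 2 + 4 * t)) * lowerRoot t ^ (p / 2)) t :=
  (hasDerivAt_lowerRoot ht |>.congr_deriv (by ring)).rpow_const_of_eq_mul _
    (lowerRoot_pos ht.le).ne'

theorem hasDerivAt_psiFun (ht : 0 < t) :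
    HasDerivAt (psiFun p) (p / 2 * psiOdd p t / √(t ^ 2 + 4 * t)) t := by
  refine ((hasDerivAt_upperRoot_rpow p ht).add (hasDerivAt_lowerRoot_rpow p ht)).congr_deriv ?_
  unfold psiOdd
  ring

theorem hasDerivAt_psiOdd (ht : 0 < t) :
    HasDerivAt (psiOdd p) (p / 2 * psiFun p t / √(t ^ 2 + 4 * t)) t := by
  refine ((hasDerivAt_upperRoot_rpow p ht).sub (hasDerivAt_lowerRoot_rpow p ht)).congr_deriv ?_
  rw [psiFun_eq_rpow_add_rpow]
  ring

theorem hasDerivAt_deriv_psiFun (ht : 0 < t) :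
    HasDerivAt (deriv (psiFun p))
      ((p ^ 2 / 4 * psiFun p t - (t + 2) * (p / 2 * psiOdd p t / √(t ^ 2 + 4 * t))) /
        (t ^ 2 + 4 * t)) t := by
  have hdisc : 0 < t ^ 2 + 4 * t := by positivity
  have hs : 0 < √(t ^ 2 + 4 * t) := sqrt_pos.2 hdisc
  have hderiv : deriv (psiFun p) =ᶠ[𝓝 t] fun x => p / 2 * psiOdd p x / √(x ^ 2 + 4 * x) := by
    filter_upwards [Ioi_mem_nhds ht] with x hx
    exact (hasDerivAt_psiFun p hx).deriv
  refine HasDerivAt.congr_of_eventuallyEq ?_ hderiv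
  refine (((hasDerivAt_psiOdd p ht).const_mul (p / 2)).div (hasDerivAt_sqrt_sq_add_four_mul ht)
    hs.ne').congr_deriv ?_
  rw [sq_sqrt hdisc.le]
  field_simp
  ring

end Psi

theorem psi_satisfies_ode_general (p : ℝ) :
    ∀ t : ℝ, 0 < t →
      DifferentiableAt ℝ (psiFun p) t ∧
      DifferentiableAt ℝ (deriv (psiFun p)) t ∧
      (t ^ 2 + 4 * t) * deriv (deriv (psiFun p)) t + (t + 2) * deriv (psiFun p) t -
        p ^ 2 / 4 * psiFun p t = 0 := by
  intro t ht
  have hψ' := hasDerivAt_psiFun p ht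
  have hψ'' := hasDerivAt_deriv_psiFun p ht
  refine ⟨hψ'.differentiableAt, hψ''.differentiableAt, ?_⟩
  have hdisc : t ^ 2 + 4 * t ≠ 0 := by positivity
  rw [hψ''.deriv, hψ'.deriv]
  field_simp
  ring

/-- For `p > 0`, the function `ψ` is twice differentiable on `(0, ∞)` and satisfies the
differential equation `(t² + 4t)·ψ'' + (t + 2)·ψ' − (p²/4)·ψ = 0` there. -/
theorem psi_satisfies_ode (p : ℝ) (hp : 0 < p) :
    ∀ t : ℝ, 0 < t →
      DifferentiableAt ℝ (psiFun p) t ∧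
      DifferentiableAt ℝ (deriv (psiFun p)) t ∧
      (t ^ 2 + 4 * t) * deriv (deriv (psiFun p)) t + (t + 2) * deriv (psiFun p) t -
        p ^ 2 / 4 * psiFun p t = 0 :=
  psi_satisfies_ode_general p
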